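/- arXiv:1401.7027 — 3 statements merged into one kernel-verified Lean document; each statement's English description precedes it below -/
import Mathlib

section
/- For integers n ≥ 2 and k ≥ 1, the number β_{n,k} (the positive real with β_{n,k}^{2^k} = γ_n, γ_n the n-th multinacci number) is not a Pisot number. -/
/-!
Squares of Pisot numbers are Pisot, so it suffices to show that no `δ` with `δ ^ 2 = γ` is
Pisot. The multinacci polynomial `Mₙ = Xⁿ - ∑_{i<n} Xⁱ` has `γ` as a simple root and all its
other roots in the open unit disc, so a proper monic factor over `ℤ` would have a constant term
of modulus `< 1`: `Mₙ` is the minimal polynomial of `γ`. If `δ` is Pisot, `-δ` is not a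
conjugate of `δ`, and the minimal polynomial `f` of `δ` satisfies `Mₙ(X²) = (-1)ⁿ f(X) f(-X)`.
For even `n`, evaluating at `0` gives `-1 = f(0)²`. For odd `n`, reduction mod 2 gives
`f ≡ Mₙ`, hence `f(X) f(-X) ≡ Mₙ(X) Mₙ(-X) (mod 4)`, whereas
`(X² - 1) (Mₙ(X²) + Mₙ(X) Mₙ(-X)) = 2X²ⁿ - 2Xⁿ⁺¹` is not divisible by 4.
-/

/-- A Pisot number: a real algebraic integer greater than 1 all of whose Galois
conjugates (other complex roots of its minimal polynomial) have modulus < 1. -/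
def IsPisot (β : ℝ) : Prop :=
  1 < β ∧ IsIntegral ℤ β ∧
    ∀ z : ℂ, Polynomial.aeval z ((minpoly ℚ β).map (algebraMap ℚ ℂ)) = 0 →
      z ≠ (β : ℂ) → ‖z‖ < 1

open Polynomial Finset

noncomputable def multinacciPoly (n : ℕ) : ℤ[X] := X ^ n - ∑ i ∈ range n, X ^ i

section MultinacciPoly

variable {n : ℕ}

theorem aeval_multinacciPoly {A : Type*} [CommRing A] (x : A) :
    aeval x (multinacciPoly n) = x ^ n - ∑ i ∈ range n, x ^ i := by
  simp [multinacciPoly]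

theorem degree_geom_sum_X_lt {R : Type*} [Semiring R] [Nontrivial R] :
    (∑ i ∈ range n, (X : R[X]) ^ i).degree < n := by
  refine (degree_sum_le _ _).trans_lt ((Finset.sup_lt_iff (WithBot.bot_lt_coe n)).2 ?_)
  intro i hi
  rw [degree_X_pow]
  exact WithBot.coe_lt_coe.2 (mem_range.1 hi)

theorem multinacciPoly_monic : (multinacciPoly n).Monic :=
  monic_X_pow_sub degree_geom_sum_X_lt

theorem natDegree_multinacciPoly : (multinacciPoly n).natDegree = n := by
  refine natDegree_eq_of_degree_eq_some ?_
  rw [multinacciPoly, degree_sub_eq_left_of_degree_lt] <;> rw [degree_X_pow]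
  exact degree_geom_sum_X_lt

theorem multinacciPoly_coeff_zero (hn : n ≠ 0) : (multinacciPoly n).coeff 0 = -1 := by
  simp [multinacciPoly, coeff_zero_eq_eval_zero, eval_finsetSum, zero_pow hn, hn]

theorem X_sub_one_mul_multinacciPoly :
    (X - 1) * multinacciPoly n = X ^ (n + 1) - 2 * X ^ n + 1 := by
  rw [multinacciPoly, mul_sub, mul_comm _ (∑ i ∈ range n, _), geom_sum_mul]
  ring

end MultinacciPoly

section Roots

variable {n : ℕ} {x y γ : ℝ}

theorem geom_sum_lt_pow_of_lt (hx : 0 < x) (hxy : x < y) (hxn : x ^ n = ∑ i ∈ range n, x ^ i) :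
    ∑ i ∈ range n, y ^ i < y ^ n := by
  have hn : n ≠ 0 := by rintro rfl; simp at hxn
  have ht : 1 < y / x := (one_lt_div hx).2 hxy
  have hy : ∀ i, y ^ i = (y / x) ^ i * x ^ i := fun i => by
    rw [← mul_pow, div_mul_cancel₀ _ hx.ne']
  calc ∑ i ∈ range n, y ^ i = ∑ i ∈ range n, (y / x) ^ i * x ^ i := by simp only [← hy]
    _ < ∑ i ∈ range n, (y / x) ^ n * x ^ i :=
        sum_lt_sum_of_nonempty (nonempty_range_iff.2 hn) fun i hi =>
          mul_lt_mul_of_pos_right (pow_lt_pow_right₀ ht (mem_range.1 hi)) (by positivity)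
    _ = y ^ n := by rw [← mul_sum, ← hxn, hy]

theorem eq_of_pow_eq_geom_sum (hx : 0 < x) (hy : 0 < y) (hxn : x ^ n = ∑ i ∈ range n, x ^ i)
    (hyn : y ^ n = ∑ i ∈ range n, y ^ i) : x = y := by
  rcases lt_trichotomy x y with h | h | h
  · exact absurd hyn (geom_sum_lt_pow_of_lt hx h hxn).ne'
  · exact h
  · exact absurd hxn (geom_sum_lt_pow_of_lt hy h hyn).ne'

theorem Complex.eq_ofReal_of_norm_sub_eq {a r : ℝ} (ha : a ≠ 0) {z : ℂ} (hz : ‖z‖ = r)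
    (h : ‖a - z‖ = a - r) : z = r := by
  have h₁ : z.re ^ 2 + z.im ^ 2 = r ^ 2 := by
    rw [← hz, Complex.sq_norm, Complex.normSq_apply]; ring
  have h₂ : (a - z.re) ^ 2 + z.im ^ 2 = (a - r) ^ 2 := by
    rw [← h, Complex.sq_norm, Complex.normSq_apply]; simp; ring
  have hre : z.re = r := mul_left_cancel₀ ha (by nlinarith)
  have him : z.im ^ 2 = 0 := by rw [hre] at h₁; linarith
  exact Complex.ext (by simpa using hre) (by simpa using pow_eq_zero_iff two_ne_zero |>.1 him)

theorem norm_lt_one_of_pow_eq_geom_sum (hγ : 0 < γ) (hγn : γ ^ n = ∑ i ∈ range n, γ ^ i)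
    {z : ℂ} (hz : z ^ n = ∑ i ∈ range n, z ^ i) (hne : z ≠ γ) : ‖z‖ < 1 := by
  by_contra! hr
  set r := ‖z‖
  -- `zⁿ (2 - z) = 1` and `rⁿ ≤ ∑ rⁱ` force `‖2 - z‖ = 2 - r`, which makes `z` real.
  have hsum : r ^ n ≤ ∑ i ∈ range n, r ^ i := by
    simpa only [← hz, norm_pow] using norm_sum_le (range n) (z ^ ·)
  have hnorm : r ^ n * ‖2 - z‖ = 1 := by
    have : z ^ n * (2 - z) = 1 := by linear_combination -(z - 1) * hz - geom_sum_mul z n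
    simpa [norm_mul, norm_pow] using congrArg norm this
  have hle : ‖2 - z‖ ≤ 2 - r := by
    have : r ^ n * ‖2 - z‖ ≤ r ^ n * (2 - r) := by
      nlinarith [mul_le_mul_of_nonneg_right hsum (sub_nonneg.2 hr), geom_sum_mul r n]
    exact le_of_mul_le_mul_left this (by positivity)
  have hge : 2 - r ≤ ‖2 - z‖ := by
    simpa using norm_sub_norm_le (2 : ℂ) z
  have hzr : z = r :=
    Complex.eq_ofReal_of_norm_sub_eq two_ne_zero rfl (by exact_mod_cast le_antisymm hle hge)
  have hrn : r ^ n = ∑ i ∈ range n, r ^ i := by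
    rw [hzr] at hz; exact_mod_cast hz
  exact hne (by rw [hzr, eq_of_pow_eq_geom_sum (by linarith) hγ hrn hγn])

end Roots

theorem Polynomial.Monic.natDegree_eq_zero_of_forall_norm_lt_one {f : ℤ[X]} (hf : f.Monic)
    (h0 : f.coeff 0 ≠ 0) (hroots : ∀ z : ℂ, aeval z f = 0 → ‖z‖ < 1) : f.natDegree = 0 := by
  set g := f.map (algebraMap ℤ ℂ)
  have hg : g.Monic := hf.map _
  have hsplit : g.Splits := IsAlgClosed.splits g
  have hroots' : ∀ z ∈ g.roots, ‖z‖ < 1 := fun z hz =>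
    hroots z (by simpa [g, aeval_def, eval_map] using (mem_roots hg.ne_zero).1 hz)
  by_contra hdeg
  have hne : g.roots ≠ 0 := by
    rw [← Multiset.card_pos, ← hsplit.natDegree_eq_card_roots, hf.natDegree_map]
    omega
  have hlt : ‖g.coeff 0‖ < 1 := by
    rw [hsplit.coeff_zero_eq_prod_roots_of_monic hg, norm_mul, norm_pow, norm_neg, norm_one,
      one_pow, one_mul]
    calc ‖g.roots.prod‖ = (g.roots.map (‖·‖)).prod := map_multiset_prod (normHom : ℂ →*₀ ℝ) _
      _ < (g.roots.map fun _ => (1 : ℝ)).prod :=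
          Multiset.prod_map_lt_prod_map hne _ _ (fun z hz => norm_pos_iff.2 ?_) hroots'
      _ = 1 := by simp
    rintro rfl
    have := (mem_roots hg.ne_zero).1 hz
    simp [g, IsRoot, ← coeff_zero_eq_eval_zero, h0] at this
  have hge : 1 ≤ ‖g.coeff 0‖ := by
    rw [coeff_map, algebraMap_int_eq, eq_intCast, Complex.norm_intCast]
    exact_mod_cast Int.one_le_abs h0
  linarith

section Minpoly

variable {n : ℕ} {γ : ℝ}

theorem X_mul_derivative_X_pow {R : Type*} [CommSemiring R] (i : ℕ) :
    X * derivative (X ^ i : R[X]) = C (i : R) * X ^ i := by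
  rcases i with _ | i
  · simp
  · rw [derivative_X_pow, Nat.add_sub_cancel]; ring

theorem aeval_derivative_multinacciPoly_ne_zero (hγ : 0 < γ)
    (hγn : γ ^ n = ∑ i ∈ range n, γ ^ i) : aeval γ (derivative (multinacciPoly n)) ≠ 0 := by
  have hn : n ≠ 0 := by rintro rfl; simp at hγn
  have hX : X * derivative (multinacciPoly n) =
      C (n : ℤ) * X ^ n - ∑ i ∈ range n, C (i : ℤ) * X ^ i := by
    simp only [multinacciPoly, derivative_sub, derivative_sum, mul_sub, mul_sum,
      X_mul_derivative_X_pow]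
  have key : γ * aeval γ (derivative (multinacciPoly n)) =
      ∑ i ∈ range n, ((n : ℝ) - i) * γ ^ i := by
    simpa [hγn, mul_sum, sub_mul, sum_sub_distrib] using congrArg (aeval γ) hX
  have hpos : 0 < ∑ i ∈ range n, ((n : ℝ) - i) * γ ^ i :=
    sum_pos (fun i hi => mul_pos (sub_pos.2 (by exact_mod_cast mem_range.1 hi)) (pow_pos hγ i))
      (nonempty_range_iff.2 hn)
  intro h
  rw [h, mul_zero] at key
  exact hpos.ne key

theorem minpoly_int_eq_multinacciPoly (hγ : 0 < γ) (hγn : γ ^ n = ∑ i ∈ range n, γ ^ i) :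
    minpoly ℤ γ = multinacciPoly n := by
  have hroot : aeval γ (multinacciPoly n) = 0 := by rw [aeval_multinacciPoly, hγn, sub_self]
  have hint : IsIntegral ℤ γ := ⟨_, multinacciPoly_monic, hroot⟩
  obtain ⟨c, hc⟩ := minpoly.isIntegrallyClosed_dvd hint hroot
  have hc_monic : c.Monic := (minpoly.monic hint).of_mul_monic_left (hc ▸ multinacciPoly_monic)
  have hcγ : aeval γ c ≠ 0 := fun h => aeval_derivative_multinacciPoly_ne_zero hγ hγn (by
    rw [hc, derivative_mul, map_add, map_mul, map_mul, minpoly.aeval, h, mul_zero, zero_mul,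
      add_zero])
  suffices c.natDegree = 0 by rw [hc, hc_monic.natDegree_eq_zero.1 this, mul_one]
  refine hc_monic.natDegree_eq_zero_of_forall_norm_lt_one ?_ fun z hz => ?_
  · intro h
    have := congrArg (coeff · 0) hc
    simp [mul_coeff_zero, h, multinacciPoly_coeff_zero (n := n) (by rintro rfl; simp at hγn)]
      at this
  · have hzn : z ^ n = ∑ i ∈ range n, z ^ i := by
      rw [← sub_eq_zero, ← aeval_multinacciPoly, hc, map_mul, hz, mul_zero]
    refine norm_lt_one_of_pow_eq_geom_sum hγ hγn hzn fun hzγ => hcγ ?_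
    rwa [hzγ, ← Complex.coe_algebraMap, aeval_algebraMap_apply, map_eq_zero] at hz

end Minpoly

section Squares

open scoped IntermediateField

variable {K L : Type*} [Field K] [Field L] [Algebra K L] {x : L}

theorem natDegree_minpoly_le_of_mem_adjoin (hx : IsIntegral K x) {y : L} (hy : y ∈ K⟮x⟯) :
    (minpoly K y).natDegree ≤ (minpoly K x).natDegree := by
  have := IntermediateField.adjoin.finiteDimensional hx
  rw [← IntermediateField.adjoin.finrank hx, ← IntermediateField.minpoly_eq ⟨y, hy⟩]
  exact minpoly.natDegree_le _

theorem natDegree_minpoly_sq_le (hx : IsIntegral K x) :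
    (minpoly K (x ^ 2)).natDegree ≤ (minpoly K x).natDegree :=
  natDegree_minpoly_le_of_mem_adjoin hx (pow_mem (IntermediateField.mem_adjoin_simple_self K x) 2)

theorem minpoly_mul_minpoly_neg_dvd_expand (hx : IsIntegral K x)
    (hneg : aeval (-x) (minpoly K x) ≠ 0) :
    minpoly K x * minpoly K (-x) ∣ expand K 2 (minpoly K (x ^ 2)) := by
  have hcop : IsCoprime (minpoly K (-x)) (minpoly K x) :=
    (minpoly.irreducible hx.neg).coprime_iff_not_dvd.2 fun h => hneg (minpoly.dvd_iff.1 h)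
  refine hcop.symm.mul_dvd (minpoly.dvd K x ?_) (minpoly.dvd K (-x) ?_)
  · rw [expand_aeval, minpoly.aeval]
  · rw [expand_aeval, neg_sq, minpoly.aeval]

theorem expand_minpoly_sq (hx : IsIntegral K x) (hneg : aeval (-x) (minpoly K x) ≠ 0) :
    expand K 2 (minpoly K (x ^ 2)) = minpoly K x * minpoly K (-x) := by
  refine eq_of_monic_of_dvd_of_natDegree_le ((minpoly.monic hx).mul (minpoly.monic hx.neg))
    ((minpoly.monic (hx.pow 2)).expand two_pos) (minpoly_mul_minpoly_neg_dvd_expand hx hneg) ?_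
  have h₁ := natDegree_minpoly_sq_le hx
  have h₂ := natDegree_minpoly_sq_le hx.neg
  rw [neg_sq] at h₂
  rw [natDegree_expand, (minpoly.monic hx).natDegree_mul (minpoly.monic hx.neg)]
  omega

theorem natDegree_minpoly_sq (hx : IsIntegral K x) (hneg : aeval (-x) (minpoly K x) ≠ 0) :
    (minpoly K (x ^ 2)).natDegree = (minpoly K x).natDegree := by
  have h := congrArg natDegree (expand_minpoly_sq hx hneg)
  have h₁ := natDegree_minpoly_sq_le hx
  have h₂ := natDegree_minpoly_sq_le hx.neg
  rw [neg_sq] at h₂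
  rw [natDegree_expand, (minpoly.monic hx).natDegree_mul (minpoly.monic hx.neg)] at h
  omega

end Squares

theorem expand_minpoly_int_sq {L : Type*} [Field L] [CharZero L] {x : L} (hx : IsIntegral ℤ x)
    (hneg : aeval (-x) (minpoly ℚ x) ≠ 0) :
    expand ℤ 2 (minpoly ℤ (x ^ 2)) =
      (-1) ^ (minpoly ℤ (x ^ 2)).natDegree * (minpoly ℤ x * (minpoly ℤ x).comp (-X)) := by
  have hQ := expand_minpoly_sq hx.tower_top hneg
  rw [minpoly.neg, ← natDegree_minpoly_sq hx.tower_top hneg,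
    minpoly.isIntegrallyClosed_eq_field_fractions' ℚ hx,
    minpoly.isIntegrallyClosed_eq_field_fractions' ℚ (hx.pow 2)] at hQ
  apply map_injective (algebraMap ℤ ℚ) (IsFractionRing.injective ℤ ℚ)
  rw [map_expand, hQ, (minpoly.monic (hx.pow 2)).natDegree_map]
  simp only [Polynomial.map_mul, Polynomial.map_pow, Polynomial.map_neg, Polynomial.map_one,
    map_comp, map_X]
  ring

namespace IsPisot

variable {β : ℝ}

theorem aeval_neg_ne_zero (h : IsPisot β) : aeval (-β) (minpoly ℚ β) ≠ 0 := by
  intro h0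
  have hne : ((-β : ℝ) : ℂ) ≠ β := by
    rw [Ne, Complex.ofReal_inj]; linarith [h.1]
  have := h.2.2 (-β : ℝ) (by
    rw [aeval_map_algebraMap, ← Complex.coe_algebraMap, aeval_algebraMap_apply, h0, map_zero]) hne
  rw [Complex.norm_real, Real.norm_eq_abs, abs_neg, abs_of_pos (by linarith [h.1])] at this
  linarith [h.1]

theorem sq (h : IsPisot β) : IsPisot (β ^ 2) := by
  have hneg := h.aeval_neg_ne_zero
  obtain ⟨hβ, hint, hconj⟩ := h
  refine ⟨by nlinarith, hint.pow 2, fun w hw hwne => ?_⟩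
  obtain ⟨z, rfl⟩ := IsAlgClosed.exists_pow_nat_eq w two_pos
  have hz : aeval z (minpoly ℚ β * minpoly ℚ (-β)) = 0 := by
    rw [← expand_minpoly_sq hint.tower_top hneg, expand_aeval, ← aeval_map_algebraMap ℂ, hw]
  have hroot : ∀ u : ℂ, aeval u (minpoly ℚ β) = 0 → u ^ 2 = z ^ 2 → ‖z ^ 2‖ < 1 := by
    intro u hu hsq
    have hu_ne : u ≠ β := by
      rintro rfl
      exact hwne (by rw [← hsq]; push_cast; ring)
    rw [← hsq, norm_pow]
    exact pow_lt_one₀ (norm_nonneg _) (hconj u (by rwa [aeval_map_algebraMap]) hu_ne) two_ne_zero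
  rcases mul_eq_zero.1 ((map_mul _ _ _).symm.trans hz) with hz | hz
  · exact hroot z hz rfl
  · refine hroot (-z) ?_ (neg_sq z)
    simpa [minpoly.neg, aeval_comp] using hz

theorem pow_two_pow (h : IsPisot β) : ∀ j : ℕ, IsPisot (β ^ 2 ^ j)
  | 0 => by simpa using h
  | j + 1 => by simpa only [pow_succ, pow_mul] using (h.pow_two_pow j).sq

end IsPisot

section Parity

theorem C_dvd_of_map_zmod_eq_zero {p : ℕ} {f : ℤ[X]}
    (h : f.map (Int.castRingHom (ZMod p)) = 0) : C (p : ℤ) ∣ f :=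
  (C_dvd_iff_dvd_coeff _ _).2 fun i =>
    (ZMod.intCast_zmod_eq_zero_iff_dvd _ p).1 (by simpa using congrArg (coeff · i) h)

theorem map_zmod_two_comp_neg_X (f : ℤ[X]) :
    (f.comp (-X)).map (Int.castRingHom (ZMod 2)) = f.map (Int.castRingHom (ZMod 2)) := by
  rw [map_comp, Polynomial.map_neg, map_X, CharTwo.neg_eq, comp_X]

theorem two_dvd_comp_neg_X_sub (f : ℤ[X]) : 2 ∣ f.comp (-X) - f := by
  simpa using C_dvd_of_map_zmod_eq_zero (p := 2)
    (by rw [Polynomial.map_sub, map_zmod_two_comp_neg_X, sub_self])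

theorem four_dvd_mul_comp_neg_X_sub {f g : ℤ[X]}
    (h : f.map (Int.castRingHom (ZMod 2)) = g.map (Int.castRingHom (ZMod 2))) :
    4 ∣ f * f.comp (-X) - g * g.comp (-X) := by
  obtain ⟨r, hr⟩ : 2 ∣ f - g := by
    simpa using C_dvd_of_map_zmod_eq_zero (p := 2) (by rw [Polynomial.map_sub, h, sub_self])
  obtain ⟨a, ha⟩ := two_dvd_comp_neg_X_sub r
  obtain ⟨b, hb⟩ := two_dvd_comp_neg_X_sub g
  have hf : f = g + 2 * r := by linear_combination hr
  have hfc : f.comp (-X) = g.comp (-X) + 2 * r.comp (-X) := by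
    simp [hf, add_comp, mul_comp]
  refine ⟨g * r + g * a + r * b + r * r.comp (-X), ?_⟩
  rw [hfc, hf]
  linear_combination (2 * g) * ha + (2 * r) * hb

end Parity

section ExpandMultinacci

variable {n : ℕ}

theorem X_sq_sub_one_mul_expand_add_mul_comp_neg_X (hodd : Odd n) :
    (X ^ 2 - 1) * (expand ℤ 2 (multinacciPoly n) +
      multinacciPoly n * (multinacciPoly n).comp (-X)) = 2 * X ^ (2 * n) - 2 * X ^ (n + 1) := by
  have h := X_sub_one_mul_multinacciPoly (n := n)
  have hexp := congrArg (expand ℤ 2) h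
  have hneg := congrArg (comp · (-X)) h
  simp only [map_mul, map_sub, map_add, map_pow, map_one, map_ofNat, expand_X] at hexp
  simp only [mul_comp, sub_comp, add_comp, pow_comp, X_comp, one_comp, ofNat_comp,
    (Nat.even_add_one.2 (Nat.not_even_iff_odd.2 hodd)).neg_pow, hodd.neg_pow] at hneg
  linear_combination hexp - ((-X - 1) * (multinacciPoly n).comp (-X)) * h
    - (X ^ (n + 1) - 2 * X ^ n + 1) * hneg

theorem expand_multinacciPoly_ne_mul_comp_neg_X (hn : n ≠ 0) (f : ℤ[X]) :
    expand ℤ 2 (multinacciPoly n) ≠ f * f.comp (-X) := by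
  intro h
  have h0 := congrArg (eval 0) h
  rw [expand_eval, eval_mul, eval_comp, eval_neg, eval_X, neg_zero, zero_pow two_ne_zero,
    ← coeff_zero_eq_eval_zero, multinacciPoly_coeff_zero hn] at h0
  nlinarith [sq_nonneg (f.eval 0)]

theorem expand_multinacciPoly_ne_neg_mul_comp_neg_X (hodd : Odd n) (hn : n ≠ 1) (f : ℤ[X]) :
    expand ℤ 2 (multinacciPoly n) ≠ -(f * f.comp (-X)) := by
  intro h
  have hmod2 : f.map (Int.castRingHom (ZMod 2)) =
      (multinacciPoly n).map (Int.castRingHom (ZMod 2)) := by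
    refine frobenius_inj (ZMod 2)[X] 2 ?_
    have := congrArg (map (Int.castRingHom (ZMod 2))) h
    rw [map_expand, ZMod.expand_card, Polynomial.map_neg, Polynomial.map_mul,
      map_zmod_two_comp_neg_X, CharTwo.neg_eq] at this
    simp [frobenius_def, this, sq]
  obtain ⟨c, hc⟩ := four_dvd_mul_comp_neg_X_sub hmod2
  have key : C (-4) * ((X ^ 2 - 1) * c) = 2 * X ^ (2 * n) - 2 * X ^ (n + 1) := by
    rw [← X_sq_sub_one_mul_expand_add_mul_comp_neg_X hodd, h, show C (-4 : ℤ) = -4 by simp]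
    linear_combination (X ^ 2 - 1) * hc
  have := congrArg (coeff · (n + 1)) key
  simp only [coeff_C_mul, coeff_sub, coeff_ofNat_mul, coeff_X_pow,
    if_neg (show n + 1 ≠ 2 * n by omega), if_true] at this
  omega

end ExpandMultinacci

theorem not_isPisot_of_sq_eq_multinacci {n : ℕ} (hn : 2 ≤ n) {γ : ℝ} (hγ : 0 < γ)
    (hγn : γ ^ n = ∑ i ∈ range n, γ ^ i) {δ : ℝ} (hδ : δ ^ 2 = γ) : ¬IsPisot δ := by
  intro hP
  have h := expand_minpoly_int_sq hP.2.1 hP.aeval_neg_ne_zero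
  rw [hδ, minpoly_int_eq_multinacciPoly hγ hγn, natDegree_multinacciPoly] at h
  rcases n.even_or_odd with heven | hodd
  · rw [heven.neg_one_pow, one_mul] at h
    exact expand_multinacciPoly_ne_mul_comp_neg_X (by omega) _ h
  · rw [hodd.neg_one_pow, neg_one_mul] at h
    exact expand_multinacciPoly_ne_neg_mul_comp_neg_X hodd (by omega) _ h

theorem beta_nk_not_pisot_general (n k : ℕ) (hn : 2 ≤ n) (hk : 1 ≤ k) (γ β : ℝ)
    (hγ : γ ∈ Set.Ioo (1:ℝ) 2) (hγeq : γ ^ n = ∑ i ∈ Finset.range n, γ ^ i)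
    (hβγ : β ^ 2 ^ k = γ) : ¬ IsPisot β := by
  intro hP
  have hsq : (β ^ 2 ^ (k - 1)) ^ 2 = γ := by
    rw [← pow_mul, ← pow_succ, Nat.sub_add_cancel hk, hβγ]
  exact not_isPisot_of_sq_eq_multinacci hn (by linarith [hγ.1]) hγeq hsq (hP.pow_two_pow (k - 1))

theorem beta_nk_not_pisot (n k : ℕ) (hn : 2 ≤ n) (hk : 1 ≤ k) (γ β : ℝ)
    (hγ : γ ∈ Set.Ioo (1:ℝ) 2) (hγeq : γ ^ n = ∑ i ∈ Finset.range n, γ ^ i)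
    (hβ : 0 < β) (hβγ : β ^ 2 ^ k = γ) : ¬ IsPisot β :=
  beta_nk_not_pisot_general n k hn hk γ β hγ hγeq hβγ
end

section
/- Let n ≥ 2, k ≥ 0 be integers and let ξ_{n,k,m}⁻, ξ_{n,k,m}⁺ ∈ {0,1} denote the m-th letters of the complementary periodic words ξ⁻_{n,k} and ξ⁺_{n,k} = *(ξ⁻_{n,k}) of period (n+1)2^k. Then for real x > 1, Σ_{m=1}^∞ (ξ_{n,k,m}⁻ − ξ_{n,k,m}⁺) x^{−m} = [x^{2^k}(x^{n·2^k} − x^{(n−1)2^k} − ... − x^{2^k} − 1)/(x^{(n+1)2^k} − 1)] · Σ_{m=1}^{2^k} (ξ_{n,k,m}⁻ − ξ_{n,k,m}⁺) x^{−m}. -/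
/-- The prefix `ξ⁻_{n,k}|_{2^k}`. -/
def xiPrefix : ℕ → List Bool
  | 0 => [false]
  | k + 1 => xiPrefix k ++ (xiPrefix k).map not

/-- The period block of `ξ⁻_{n,k}`: the prefix followed by `n` copies of its
bitwise complement; its length is `(n+1) * 2^k`. -/
def xiBlock (n k : ℕ) : List Bool :=
  xiPrefix k ++ (List.replicate n ((xiPrefix k).map not)).flatten

/-- The `m`-th letter (0-indexed) of the periodic infinite word `ξ⁻_{n,k}`. -/
def xiLetterNeg (n k m : ℕ) : Bool :=
  (xiBlock n k).getD (m % ((n + 1) * 2 ^ k)) false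

/-!
Write `σ m = ±1` for the signed letters, `S_N = ∑_{m<N} σ m / x^(m+1)` and `z = x^(2^k)`.
Since `σ` has period `L = (n+1)2^k`, the series `T` satisfies `T = S_L + T / x^L`, so
`T = x^L / (x^L - 1) · S_L`. Within one period the word is its length-`2^k` prefix followed by
`n` complemented copies of it, whence `S_L = (1 - ∑_{i<n} z^{-(i+1)}) · S_{2^k}`; finally
`z^(n+1) (1 - ∑_{i<n} z^{-(i+1)}) = z (z^n - ∑_{j<n} z^j)`.
-/

open Finset

theorem Finset.sum_range_mul {M : Type*} [AddCommMonoid M] (f : ℕ → M) (a b : ℕ) :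
    ∑ m ∈ range (a * b), f m = ∑ i ∈ range a, ∑ j ∈ range b, f (i * b + j) := by
  induction a with
  | zero => simp
  | succ a ih => rw [Nat.succ_mul, sum_range_add, ih, sum_range_succ]

theorem List.getD_flatten_replicate {α : Type*} (l : List α) (d : α) {n i s : ℕ} (hi : i < n)
    (hs : s < l.length) : (replicate n l).flatten.getD (i * l.length + s) d = l.getD s d := by
  induction n generalizing i with
  | zero => omega
  | succ n ih =>
    rw [replicate_succ, flatten_cons]
    rcases i with _ | i
    · simpa using getD_append l _ d s hs
    · rw [getD_append_right l _ d _ (by nlinarith), Nat.succ_mul,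
        show i * l.length + l.length + s - l.length = i * l.length + s by omega]
      exact ih (by omega)

theorem Function.Periodic.tsum_div_pow {𝕜 : Type*} [NormedField 𝕜] {a : ℕ → 𝕜} {L : ℕ}
    (ha : Function.Periodic a L) {x : 𝕜} (hx : x ≠ 0) (hxL : x ^ L ≠ 1)
    (hs : Summable fun m => a m / x ^ (m + 1)) :
    ∑' m, a m / x ^ (m + 1) = x ^ L / (x ^ L - 1) * ∑ m ∈ range L, a m / x ^ (m + 1) := by
  have hshift : ∀ m, a (m + L) / x ^ (m + L + 1) = (a m / x ^ (m + 1)) / x ^ L := fun m => by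
    rw [ha m, add_right_comm, pow_add, div_div]
  have hT := (hs.sum_add_tsum_nat_add L).symm
  simp only [hshift, tsum_div_const] at hT
  have hxL1 : x ^ L - 1 ≠ 0 := sub_ne_zero.mpr hxL
  have hxL0 : x ^ L ≠ 0 := pow_ne_zero _ hx
  rw [div_mul_eq_mul_div, eq_div_iff hxL1]
  linear_combination (x ^ L) * hT + div_mul_cancel₀ (∑' m, a m / x ^ (m + 1)) hxL0

theorem summable_div_pow_of_abs_le {a : ℕ → ℝ} {C : ℝ} (ha : ∀ m, |a m| ≤ C) {x : ℝ} (hx : 1 < x) :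
    Summable fun m => a m / x ^ (m + 1) := by
  have hx0 : 0 < x := by linarith
  refine Summable.of_norm_bounded ((summable_geometric_of_lt_one (by positivity)
    (inv_lt_one_of_one_lt₀ hx)).mul_left (C / x)) fun m => ?_
  rw [Real.norm_eq_abs, abs_div, abs_of_pos (pow_pos hx0 _), inv_pow, pow_succ]
  calc |a m| / (x ^ m * x) ≤ C / (x ^ m * x) := by gcongr; exact ha m
    _ = C / x * (x ^ m)⁻¹ := by ring

theorem sum_div_pow_of_negated_blocks {K : Type*} [Field K] {s : ℕ → K} {n P : ℕ}
    (hs : ∀ i < n, ∀ j < P, s ((i + 1) * P + j) = -s j) (x : K) :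
    ∑ m ∈ range ((n + 1) * P), s m / x ^ (m + 1) =
      (1 - ∑ i ∈ range n, ((x ^ P) ^ (i + 1))⁻¹) * ∑ m ∈ range P, s m / x ^ (m + 1) := by
  have hblock : ∀ i < n, ∑ j ∈ range P, s ((i + 1) * P + j) / x ^ ((i + 1) * P + j + 1) =
      -(((x ^ P) ^ (i + 1))⁻¹ * ∑ m ∈ range P, s m / x ^ (m + 1)) := fun i hi => by
    rw [mul_sum, ← sum_neg_distrib]
    refine sum_congr rfl fun j hj => ?_
    rw [hs i hi j (mem_range.mp hj), add_assoc, pow_add, ← pow_mul, mul_comm P, div_mul_eq_div_div]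
    ring
  rw [sum_range_mul, sum_range_succ', sum_congr rfl fun i hi => hblock i (mem_range.mp hi)]
  simp only [zero_mul, zero_add, sum_neg_distrib, ← sum_mul]
  ring

theorem one_sub_sum_inv_pow_mul {K : Type*} [Field K] {z : K} (hz : z ≠ 0) (n : ℕ) :
    z ^ (n + 1) * (1 - ∑ i ∈ range n, (z ^ (i + 1))⁻¹) = z * (z ^ n - ∑ j ∈ range n, z ^ j) := by
  have hterm : ∀ i ∈ range n, z ^ (n + 1) * (z ^ (i + 1))⁻¹ = z * z ^ (n - 1 - i) := fun i hi => by
    rw [← div_eq_mul_inv, div_eq_iff (pow_ne_zero _ hz), ← pow_succ', ← pow_add]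
    have := mem_range.mp hi
    congr 1
    omega
  rw [mul_sub, mul_one, mul_sum, sum_congr rfl hterm, ← mul_sum, sum_range_reflect (z ^ ·) n]
  ring

theorem xiPrefix_length (k : ℕ) : (xiPrefix k).length = 2 ^ k := by
  induction k with
  | zero => rfl
  | succ k ih => rw [xiPrefix, List.length_append, List.length_map, ih, pow_succ, mul_two]

theorem xiLetterNeg_periodic (n k : ℕ) : Function.Periodic (xiLetterNeg n k) ((n + 1) * 2 ^ k) :=
  fun m => by rw [xiLetterNeg, Nat.add_mod_right, xiLetterNeg]

theorem xiLetterNeg_of_lt (n k : ℕ) {m : ℕ} (hm : m < 2 ^ k) :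
    xiLetterNeg n k m = (xiPrefix k).getD m false := by
  rw [xiLetterNeg, Nat.mod_eq_of_lt (by nlinarith), xiBlock,
    List.getD_append _ _ _ _ (by rwa [xiPrefix_length])]

theorem xiLetterNeg_complement {n k i s : ℕ} (hi : i < n) (hs : s < 2 ^ k) :
    xiLetterNeg n k ((i + 1) * 2 ^ k + s) = !xiLetterNeg n k s := by
  have hlen : ((xiPrefix k).map not).length = 2 ^ k := by rw [List.length_map, xiPrefix_length]
  rw [xiLetterNeg_of_lt n k hs, xiLetterNeg, Nat.mod_eq_of_lt (by nlinarith), xiBlock,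
    List.getD_append_right _ _ _ _ (by rw [xiPrefix_length]; nlinarith), xiPrefix_length,
    Nat.succ_mul, show i * 2 ^ k + 2 ^ k + s - 2 ^ k = i * 2 ^ k + s by omega, ← hlen,
    List.getD_flatten_replicate _ _ hi (by rwa [hlen]),
    List.getD_eq_getElem _ _ (by rwa [hlen]), List.getElem_map,
    List.getD_eq_getElem _ _ (by rwa [xiPrefix_length])]

theorem xi_series_factorisation_general (n k : ℕ) (x : ℝ) (hx : 1 < x) :
    (∑' m : ℕ, (if xiLetterNeg n k m then (1:ℝ) else -1) / x ^ (m + 1)) =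
      x ^ 2 ^ k * (x ^ (2 ^ k * n) - ∑ j ∈ Finset.range n, x ^ (2 ^ k * j)) /
          (x ^ ((n + 1) * 2 ^ k) - 1) *
        ∑ m ∈ Finset.range (2 ^ k), (if xiLetterNeg n k m then (1:ℝ) else -1) / x ^ (m + 1) := by
  have hper : Function.Periodic (fun m => if xiLetterNeg n k m then (1:ℝ) else -1)
      ((n + 1) * 2 ^ k) := fun m => by simp only [xiLetterNeg_periodic n k m]
  have hneg : ∀ i < n, ∀ j < 2 ^ k, (if xiLetterNeg n k ((i + 1) * 2 ^ k + j) then (1:ℝ) else -1) =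
      -(if xiLetterNeg n k j then (1:ℝ) else -1) := fun i hi j hj => by
    rw [xiLetterNeg_complement hi hj]; cases xiLetterNeg n k j <;> simp
  have hbound : ∀ m, |(if xiLetterNeg n k m then (1:ℝ) else -1)| ≤ 1 := fun m => by
    split_ifs <;> simp
  rw [hper.tsum_div_pow (by positivity) (one_lt_pow₀ hx (by positivity)).ne'
      (summable_div_pow_of_abs_le hbound hx), sum_div_pow_of_negated_blocks hneg, ← mul_assoc]
  congr 1
  simp only [mul_comm (n + 1), pow_mul]
  rw [div_mul_eq_mul_div, one_sub_sum_inv_pow_mul (by positivity)]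

theorem xi_series_factorisation (n k : ℕ) (hn : 2 ≤ n) (x : ℝ) (hx : 1 < x) :
    (∑' m : ℕ, (if xiLetterNeg n k m then (1:ℝ) else -1) / x ^ (m + 1)) =
      x ^ 2 ^ k * (x ^ (2 ^ k * n) - ∑ j ∈ Finset.range n, x ^ (2 ^ k * j)) /
          (x ^ ((n + 1) * 2 ^ k) - 1) *
        ∑ m ∈ Finset.range (2 ^ k), (if xiLetterNeg n k m then (1:ℝ) else -1) / x ^ (m + 1) :=
  xi_series_factorisation_general n k x hx
end

section
/- Let n ≥ 2, β = γ_n the multinacci number of order n, and α = 1 − β/2. Let ω⁻ be the periodic word with period block (0, 1^n) (one 0 followed by n ones). Then α/(1−β) + Σ_{k=1}^∞ ω⁻_k β^{−k} = 1/2. -/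
/-!
Removing the multiples of `n + 1` from the geometric series `∑ β^{-(j+1)} = 1 / (β - 1)` leaves
`∑ ω⁻_k β^{-k} = 1 / (β - 1) - β^n / (β^{n+1} - 1)`. The multinacci equation gives
`β^n (β - 1) = β^n - 1`, i.e. `β^{n+1} - 1 = 2 β^n (β - 1)`, so the series equals
`1 / (2 (β - 1))`, and adding `(1 - β/2) / (1 - β)` yields `1/2`.
-/

section Geometric

variable {r : ℝ}

theorem hasSum_geometric_succ_of_lt_one (h₀ : 0 ≤ r) (h₁ : r < 1) :
    HasSum (fun j : ℕ => r ^ (j + 1)) (r / (1 - r)) := by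
  simpa [pow_succ', div_eq_mul_inv] using (hasSum_geometric_of_lt_one h₀ h₁).mul_left r

theorem hasSum_geometric_succ_ite_mod_eq_zero (h₀ : 0 ≤ r) (h₁ : r < 1) {p : ℕ} (hp : p ≠ 0) :
    HasSum (fun j : ℕ => if j % p = 0 then r ^ (j + 1) else 0) (r / (1 - r ^ p)) := by
  rw [← (mul_right_injective₀ hp : Function.Injective (p * ·)).hasSum_iff]
  · have hrp : r ^ p < 1 := pow_lt_one₀ h₀ h₁ hp
    rw [div_eq_mul_inv]
    refine ((hasSum_geometric_of_lt_one (by positivity) hrp).mul_left r).congr_fun fun k => ?_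
    simp [pow_succ', pow_mul]
  · intro j hj
    rw [if_neg]
    exact fun h => hj ⟨j / p, Nat.mul_div_cancel' (Nat.dvd_of_mod_eq_zero h)⟩

theorem hasSum_geometric_succ_ite_mod_ne_zero (h₀ : 0 ≤ r) (h₁ : r < 1) {p : ℕ} (hp : p ≠ 0) :
    HasSum (fun j : ℕ => if j % p = 0 then 0 else r ^ (j + 1))
      (r / (1 - r) - r / (1 - r ^ p)) := by
  refine ((hasSum_geometric_succ_of_lt_one h₀ h₁).sub
    (hasSum_geometric_succ_ite_mod_eq_zero h₀ h₁ hp)).congr_fun fun j => ?_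
  split_ifs <;> ring

end Geometric

theorem pow_succ_eq_two_mul_pow_sub_one_of_multinacci {β : ℝ} {n : ℕ}
    (h : β ^ n = ∑ j ∈ Finset.range n, β ^ j) : β ^ (n + 1) = 2 * β ^ n - 1 := by
  linear_combination (β - 1) * h + geom_sum_mul β n

theorem projection_xi_minus_base_general (n : ℕ) (β : ℝ)
    (hβ : β ∈ Set.Ioo (1:ℝ) 2) (hβeq : β ^ n = ∑ j ∈ Finset.range n, β ^ j) :
    (1 - β / 2) / (1 - β) +
      (∑' j : ℕ, (if j % (n + 1) = 0 then (0:ℝ) else 1) / β ^ (j + 1)) = 1 / 2 := by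
  have hβ₁ : 1 < β := hβ.1
  have hβ₀ : 0 < β := by linarith
  have hsum := hasSum_geometric_succ_ite_mod_ne_zero (inv_nonneg.2 hβ₀.le)
    (inv_lt_one_of_one_lt₀ hβ₁) n.succ_ne_zero
  have hterm : ∀ j : ℕ, (if j % (n + 1) = 0 then (0:ℝ) else 1) / β ^ (j + 1) =
      if j % (n + 1) = 0 then 0 else β⁻¹ ^ (j + 1) := fun j => by
    split_ifs <;> simp [inv_pow]
  have hsub : β - 1 ≠ 0 := by linarith
  have hval : β⁻¹ / (1 - β⁻¹) - β⁻¹ / (1 - β⁻¹ ^ (n + 1)) = 1 / (2 * (β - 1)) := by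
    have hrel := pow_succ_eq_two_mul_pow_sub_one_of_multinacci hβeq
    have hpow : β ^ (n + 1) - 1 ≠ 0 := sub_ne_zero.2 (one_lt_pow₀ hβ₁ n.succ_ne_zero).ne'
    rw [inv_pow]
    field_simp
    rw [pow_succ] at hrel ⊢
    linear_combination (-β) * hrel
  have hsub' : 1 - β ≠ 0 := by linarith
  simp_rw [hterm, hsum.tsum_eq, hval]
  field_simp
  ring

theorem projection_xi_minus_base (n : ℕ) (hn : 2 ≤ n) (β : ℝ)
    (hβ : β ∈ Set.Ioo (1:ℝ) 2) (hβeq : β ^ n = ∑ j ∈ Finset.range n, β ^ j) :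
    (1 - β / 2) / (1 - β) +
      (∑' j : ℕ, (if j % (n + 1) = 0 then (0:ℝ) else 1) / β ^ (j + 1)) = 1 / 2 :=
  projection_xi_minus_base_general n β hβ hβeq
end
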